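/- arXiv:1512.05717 — 4 statements merged into one kernel-verified Lean document; each statement's English description precedes it below -/
import Mathlib

section
/- Every point p = (p₀,p₁,p₂,p₃) on the elliptic curve E ⊂ P³ defined by the two quadrics y₀²+y₁²+y₂²+y₃² = 0 and y₃² + ((1-γ)/(1+α))y₁² + ((1+γ)/(1-β))y₂² = 0 has at least three non-zero coordinates, provided α + β + γ + αβγ = 0 and {α,β,γ} ∩ {0,±1} = ∅. -/
/-!
For two diagonal quadrics `∑ pᵢ² = 0` and `∑ cᵢ pᵢ² = 0`, a point supported on two coordinates
`i, j` gives a linear system for `(pᵢ², pⱼ²)` with determinant `cⱼ - cᵢ`, so it vanishes as soon as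
the `cᵢ` are pairwise distinct. For `E` the `cᵢ` are `0, (1-γ)(1-β), (1+γ)(1+α), (1+α)(1-β)`; thanks
to `α + β + γ + αβγ = 0` their differences factor into `1 ± α`, `1 ± β`, `1 ± γ`, `γ`, `α + γ` and
`β + γ`, none of which vanishes (`β + γ = 0` would force `α (1 - β²) = 0`).
-/

open Finset

theorem eq_zero_of_sum_sq_eq_zero_of_card_le_two {k ι : Type*} [Field k] [Fintype ι]
    {c p : ι → k} (hc : Function.Injective c)
    (h₁ : ∑ i, p i ^ 2 = 0) (h₂ : ∑ i, c i * p i ^ 2 = 0)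
    {s : Finset ι} (hs : #s ≤ 2) (hp : ∀ i ∉ s, p i = 0) : p = 0 := by
  classical
  have hsub (f : ι → k) (hf : ∀ i ∉ s, f i = 0) : ∑ i ∈ s, f i = ∑ i, f i :=
    sum_subset (subset_univ s) fun i _ hi => hf i hi
  have h₁' : ∑ i ∈ s, p i ^ 2 = 0 := (hsub _ fun i hi => by simp [hp i hi]).trans h₁
  have h₂' : ∑ i ∈ s, c i * p i ^ 2 = 0 := (hsub _ fun i hi => by simp [hp i hi]).trans h₂
  suffices hsq : ∀ i ∈ s, p i ^ 2 = 0 by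
    funext i
    by_cases hi : i ∈ s
    · exact pow_eq_zero_iff two_ne_zero |>.mp (hsq i hi)
    · exact hp i hi
  obtain hs0 | hs1 | hs2 : #s = 0 ∨ #s = 1 ∨ #s = 2 := by omega
  · simp [card_eq_zero.mp hs0]
  · obtain ⟨a, rfl⟩ := card_eq_one.mp hs1
    simpa using h₁'
  · obtain ⟨a, b, hab, rfl⟩ := card_eq_two.mp hs2
    rw [sum_pair hab] at h₁' h₂'
    have hcab : c a - c b ≠ 0 := sub_ne_zero.mpr (hc.ne hab)
    have hpa : p a ^ 2 = 0 :=
      (mul_eq_zero.mp (by linear_combination h₂' - c b * h₁')).resolve_left hcab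
    have hpb : p b ^ 2 = 0 := by linear_combination h₁' - hpa
    intro i hi
    rcases mem_insert.mp hi with rfl | hi
    · exact hpa
    · rwa [mem_singleton.mp hi]

section Parameters

variable {k : Type*} [Field k] {α β γ : k}

theorem add_ne_zero_of_add_add_add_mul_mul_eq_zero (h : α + β + γ + α * β * γ = 0)
    (hα : α ≠ 0) (hβ : β ≠ 1) (hβ' : β ≠ -1) : β + γ ≠ 0 := by
  intro hβγ
  have : α * ((1 - β) * (1 + β)) = 0 := by linear_combination h - (1 + α * β) * hβγ
  exact mul_ne_zero hα (mul_ne_zero (sub_ne_zero.mpr hβ.symm)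
    (fun h₀ => hβ' (by linear_combination h₀))) this

/-- The second quadric of `E`, multiplied by `(1 + α) (1 - β)`, is `∑ cᵢ yᵢ²` with these `cᵢ`. -/
def secondQuadricCoeffs (α β γ : k) : Fin 4 → k :=
  ![0, (1 - γ) * (1 - β), (1 + γ) * (1 + α), (1 + α) * (1 - β)]

theorem sum_secondQuadricCoeffs_mul_sq {p : Fin 4 → k} (hα : 1 + α ≠ 0) (hβ : 1 - β ≠ 0)
    (he : p 3 ^ 2 + ((1 - γ) / (1 + α)) * p 1 ^ 2 + ((1 + γ) / (1 - β)) * p 2 ^ 2 = 0) :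
    ∑ i, secondQuadricCoeffs α β γ i * p i ^ 2 = 0 := by
  simp only [Fin.sum_univ_four, secondQuadricCoeffs]
  field_simp at he
  simp only [Matrix.cons_val]
  linear_combination he

theorem injective_secondQuadricCoeffs (h : α + β + γ + α * β * γ = 0)
    (hα : α ≠ 0 ∧ α ≠ 1 ∧ α ≠ -1) (hβ : β ≠ 0 ∧ β ≠ 1 ∧ β ≠ -1)
    (hγ : γ ≠ 0 ∧ γ ≠ 1 ∧ γ ≠ -1) : Function.Injective (secondQuadricCoeffs α β γ) := by
  have ha : 1 + α ≠ 0 := fun h₀ => hα.2.2 (by linear_combination h₀)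
  have hb : 1 - β ≠ 0 := sub_ne_zero.mpr hβ.2.1.symm
  have hg : 1 - γ ≠ 0 := sub_ne_zero.mpr hγ.2.1.symm
  have hg' : 1 + γ ≠ 0 := fun h₀ => hγ.2.2 (by linear_combination h₀)
  have hβγ : β + γ ≠ 0 := add_ne_zero_of_add_add_add_mul_mul_eq_zero h hα.1 hβ.2.1 hβ.2.2
  have hαγ : α + γ ≠ 0 :=
    add_ne_zero_of_add_add_add_mul_mul_eq_zero (by linear_combination h) hβ.1 hα.2.1 hα.2.2
  have h01 : 0 ≠ (1 - γ) * (1 - β) := (mul_ne_zero hg hb).symm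
  have h02 : 0 ≠ (1 + γ) * (1 + α) := (mul_ne_zero hg' ha).symm
  have h03 : 0 ≠ (1 + α) * (1 - β) := (mul_ne_zero ha hb).symm
  have h12 : (1 - γ) * (1 - β) ≠ (1 + γ) * (1 + α) := fun h₀ =>
    mul_ne_zero hγ.1 (mul_ne_zero ha hb) (by linear_combination -h₀ - h)
  have h13 : (1 - γ) * (1 - β) ≠ (1 + α) * (1 - β) := fun h₀ =>
    mul_ne_zero hb hαγ (by linear_combination -h₀)
  have h23 : (1 + γ) * (1 + α) ≠ (1 + α) * (1 - β) := fun h₀ =>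
    mul_ne_zero ha hβγ (by linear_combination h₀)
  intro i j hij
  fin_cases i <;> fin_cases j <;> simp_all [secondQuadricCoeffs, eq_comm]

end Parameters

theorem stmt5_general {k : Type*} [Field k]
    (α β γ : k) (hsum : α + β + γ + α * β * γ = 0)
    (hα : α ≠ 0 ∧ α ≠ 1 ∧ α ≠ -1) (hβ : β ≠ 0 ∧ β ≠ 1 ∧ β ≠ -1)
    (hγ : γ ≠ 0 ∧ γ ≠ 1 ∧ γ ≠ -1)
    (p : Fin 4 → k) (hp : p ≠ 0)
    (he1 : p 0 ^ 2 + p 1 ^ 2 + p 2 ^ 2 + p 3 ^ 2 = 0)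
    (he2 : p 3 ^ 2 + ((1 - γ) / (1 + α)) * p 1 ^ 2 + ((1 + γ) / (1 - β)) * p 2 ^ 2 = 0) :
    ∃ a b c : Fin 4, a ≠ b ∧ a ≠ c ∧ b ≠ c ∧ p a ≠ 0 ∧ p b ≠ 0 ∧ p c ≠ 0 := by
  classical
  have ha : 1 + α ≠ 0 := fun h₀ => hα.2.2 (by linear_combination h₀)
  have hb : 1 - β ≠ 0 := sub_ne_zero.mpr hβ.2.1.symm
  have hmany : 2 < #(univ.filter (p · ≠ 0)) := lt_of_not_ge fun hfew =>
    hp (eq_zero_of_sum_sq_eq_zero_of_card_le_two (injective_secondQuadricCoeffs hsum hα hβ hγ)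
      (by simpa [Fin.sum_univ_four] using he1) (sum_secondQuadricCoeffs_mul_sq ha hb he2) hfew
      (by simp))
  obtain ⟨a, b, c, hpa, hpb, hpc, hab, hac, hbc⟩ := two_lt_card_iff.mp hmany
  simp only [mem_filter, mem_univ, true_and] at hpa hpb hpc
  exact ⟨a, b, c, hab, hac, hbc, hpa, hpb, hpc⟩

/-- every point `p` on the elliptic curve `E ⊂ P³` cut out by
`y₀²+y₁²+y₂²+y₃² = 0` and `y₃² + ((1-γ)/(1+α))y₁² + ((1+γ)/(1-β))y₂² = 0` has at least
three non-zero coordinates, provided `α+β+γ+αβγ = 0` and `{α,β,γ} ∩ {0,±1} = ∅`. -/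
theorem stmt5 {k : Type*} [Field k] [IsAlgClosed k] (h2 : (2 : k) ≠ 0)
    (α β γ : k) (hsum : α + β + γ + α * β * γ = 0)
    (hα : α ≠ 0 ∧ α ≠ 1 ∧ α ≠ -1) (hβ : β ≠ 0 ∧ β ≠ 1 ∧ β ≠ -1)
    (hγ : γ ≠ 0 ∧ γ ≠ 1 ∧ γ ≠ -1)
    (p : Fin 4 → k) (hp : p ≠ 0)
    (he1 : p 0 ^ 2 + p 1 ^ 2 + p 2 ^ 2 + p 3 ^ 2 = 0)
    (he2 : p 3 ^ 2 + ((1 - γ) / (1 + α)) * p 1 ^ 2 + ((1 + γ) / (1 - β)) * p 2 ^ 2 = 0) :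
    ∃ a b c : Fin 4, a ≠ b ∧ a ≠ c ∧ b ≠ c ∧ p a ≠ 0 ∧ p b ≠ 0 ∧ p c ≠ 0 :=
  stmt5_general α β γ hsum hα hβ hγ p hp he1 he2
end

section
/- For every point p on the elliptic curve E (defined by y₀²+y₁²+y₂²+y₃² = 0 and y₃² + ((1-γ)/(1+α))y₁² + ((1+γ)/(1-β))y₂² = 0 with α+β+γ+αβγ=0 and {α,β,γ}∩{0,±1}=∅), the orbit of p under the Klein four-group action by sign changes g₁: (p₀,p₁,p₂,p₃)↦(p₀,p₁,-p₂,-p₃), g₂: (p₀,p₁,p₂,p₃)↦(p₀,-p₁,p₂,-p₃) contains exactly 4 points. -/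
/-!
If `g p` and `h p` are proportional for `g ≠ h`, then `p` is an eigenvector of the nontrivial
sign change `g + h`, whose two eigenspaces are coordinate lines `x_m = x_n = 0`; as `2 ≠ 0`, `p`
lies in one of them. But `E` is cut out by the diagonal quadrics `∑ xᵢ² = 0` and `∑ bᵢ xᵢ² = 0`
with `b = (0, (1-γ)/(1+α), (1+γ)/(1-β), 1)`, and the conditions on `α, β, γ` make the `bᵢ`
pairwise distinct. So on such a line the two surviving squares satisfy a linear system with
determinant `b_m - b_n ≠ 0`, forcing `p = 0`.
-/

variable {k : Type*} [Field k]

/-- Sign pattern of the Klein four-group action on coordinates of `P³`: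
`g₁ = (1,0)` negates coordinates 2,3; `g₂ = (0,1)` negates coordinates 1,3. -/
def klSgn (k : Type*) [Field k] (g : ZMod 2 × ZMod 2) : Fin 4 → k :=
  ![1, (-1) ^ g.2.val, (-1) ^ g.1.val, (-1) ^ (g.1.val + g.2.val)]

/-- The (affine representative of the) action of `g` on a point `p ∈ P³`. -/
def klAct (k : Type*) [Field k] (g : ZMod 2 × ZMod 2) (p : Fin 4 → k) : Fin 4 → k :=
  fun i => klSgn k g i * p i

/-- `p` lies on the elliptic curve `E`. -/
def onE (α β γ : k) (p : Fin 4 → k) : Prop :=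
  p 0 ^ 2 + p 1 ^ 2 + p 2 ^ 2 + p 3 ^ 2 = 0 ∧
  p 3 ^ 2 + ((1 - γ) / (1 + α)) * p 1 ^ 2 + ((1 + γ) / (1 - β)) * p 2 ^ 2 = 0

lemma neg_one_pow_val_add {R : Type*} [Ring R] (a b : ZMod 2) :
    (-1 : R) ^ (a + b).val = (-1) ^ a.val * (-1) ^ b.val := by
  rw [ZMod.val_add, ← neg_one_pow_eq_pow_mod_two, pow_add]

lemma klSgn_add (g h : ZMod 2 × ZMod 2) (i : Fin 4) :
    klSgn k (g + h) i = klSgn k g i * klSgn k h i := by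
  fin_cases i <;> simp [klSgn, neg_one_pow_val_add, pow_add]
  ring

lemma klSgn_mul_self (g : ZMod 2 × ZMod 2) (i : Fin 4) : klSgn k g i * klSgn k g i = 1 := by
  fin_cases i <;> simp [klSgn, ← mul_pow]

lemma klSgn_add_mul_eq_of_klAct_eq_smul {g h : ZMod 2 × ZMod 2} {p : Fin 4 → k} {c : k}
    (heq : klAct k g p = c • klAct k h p) (i : Fin 4) :
    klSgn k (g + h) i * p i = c * p i := by
  have hi : klSgn k g i * p i = c * (klSgn k h i * p i) := congrFun heq i
  rw [klSgn_add]
  linear_combination klSgn k h i * hi + c * p i * klSgn_mul_self (k := k) h i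

lemma klSgn_eq_off_pair {d : ZMod 2 × ZMod 2} (hd : d ≠ 0) {ε : k} (hε : ε = 1 ∨ ε = -1) :
    ∃ m n : Fin 4, m ≠ n ∧ ∀ i, i ≠ m → i ≠ n → klSgn k d i = ε := by
  fin_cases d
  · exact absurd rfl hd
  all_goals rcases hε with rfl | rfl
  · exact ⟨1, 3, by decide, by intro i; fin_cases i <;> simp [klSgn, ZMod.val]⟩
  · exact ⟨0, 2, by decide, by intro i; fin_cases i <;> simp [klSgn, ZMod.val]⟩
  · exact ⟨2, 3, by decide, by intro i; fin_cases i <;> simp [klSgn, ZMod.val]⟩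
  · exact ⟨0, 1, by decide, by intro i; fin_cases i <;> simp [klSgn, ZMod.val]⟩
  · exact ⟨1, 2, by decide, by intro i; fin_cases i <;> simp [klSgn, ZMod.val]⟩
  · exact ⟨0, 3, by decide, by intro i; fin_cases i <;> simp [klSgn, ZMod.val]⟩

lemma exists_sign_forall_eq_zero_of_mul_eq_mul {ι : Type*} {s p : ι → k} {c : k}
    (h2 : (2 : k) ≠ 0) (h : ∀ i, s i * p i = c * p i) :
    ∃ ε : k, (ε = 1 ∨ ε = -1) ∧ ∀ i, s i = ε → p i = 0 := by
  by_cases hc : c = 1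
  · refine ⟨-1, Or.inr rfl, fun i hi => ?_⟩
    have hpi := h i
    rw [hi, hc] at hpi
    have hi' : 2 * p i = 0 := by linear_combination -hpi
    exact (mul_eq_zero.mp hi').resolve_left h2
  · refine ⟨1, Or.inl rfl, fun i hi => ?_⟩
    have hpi := h i
    rw [hi] at hpi
    have hi' : (1 - c) * p i = 0 := by linear_combination hpi
    exact (mul_eq_zero.mp hi').resolve_left (sub_ne_zero.mpr (Ne.symm hc))

lemma eq_zero_of_diagonal_quadrics_of_forall_ne_pair {ι : Type*} [Fintype ι] {b p : ι → k}
    {m n : ι} (hmn : m ≠ n) (hb : b m ≠ b n)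
    (h1 : ∑ i, p i ^ 2 = 0) (h2 : ∑ i, b i * p i ^ 2 = 0)
    (hp : ∀ i, i ≠ m → i ≠ n → p i = 0) : p = 0 := by
  rw [Fintype.sum_eq_add m n hmn fun i hi => by simp [hp i hi.1 hi.2]] at h1 h2
  have hm : (b n - b m) * p m ^ 2 = 0 := by linear_combination b n * h1 - h2
  have hn : (b m - b n) * p n ^ 2 = 0 := by linear_combination b m * h1 - h2
  have hm0 : p m = 0 := pow_eq_zero_iff two_ne_zero |>.mp
    ((mul_eq_zero.mp hm).resolve_left (sub_ne_zero.mpr hb.symm))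
  have hn0 : p n = 0 := pow_eq_zero_iff two_ne_zero |>.mp
    ((mul_eq_zero.mp hn).resolve_left (sub_ne_zero.mpr hb))
  funext i
  by_cases him : i = m
  · exact him ▸ hm0
  by_cases hin : i = n
  · exact hin ▸ hn0
  exact hp i him hin

def eCoeffs (α β γ : k) : Fin 4 → k := ![0, (1 - γ) / (1 + α), (1 + γ) / (1 - β), 1]

lemma onE_iff {α β γ : k} {p : Fin 4 → k} :
    onE α β γ p ↔ ∑ i, p i ^ 2 = 0 ∧ ∑ i, eCoeffs α β γ i * p i ^ 2 = 0 := by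
  simp only [onE, eCoeffs, Fin.sum_univ_four, Matrix.cons_val]
  refine Iff.and Iff.rfl ⟨fun h => ?_, fun h => ?_⟩ <;> linear_combination h

lemma eCoeffs_injective {α β γ : k} (hsum : α + β + γ + α * β * γ = 0)
    (hα : α ≠ 0 ∧ α ≠ 1 ∧ α ≠ -1) (hβ : β ≠ 0 ∧ β ≠ 1 ∧ β ≠ -1)
    (hγ : γ ≠ 0 ∧ γ ≠ 1 ∧ γ ≠ -1) : Function.Injective (eCoeffs α β γ) := by
  obtain ⟨hα0, hα1, hα1'⟩ := hα
  obtain ⟨hβ0, hβ1, hβ1'⟩ := hβ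
  obtain ⟨hγ0, hγ1, hγ1'⟩ := hγ
  have hαp : 1 + α ≠ 0 := fun h => hα1' (by linear_combination h)
  have hαm : 1 - α ≠ 0 := fun h => hα1 (by linear_combination -h)
  have hβp : 1 + β ≠ 0 := fun h => hβ1' (by linear_combination h)
  have hβm : 1 - β ≠ 0 := fun h => hβ1 (by linear_combination -h)
  have hA0 : (1 - γ) / (1 + α) ≠ 0 := div_ne_zero (fun h => hγ1 (by linear_combination -h)) hαp
  have hB0 : (1 + γ) / (1 - β) ≠ 0 := div_ne_zero (fun h => hγ1' (by linear_combination h)) hβm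
  have hA1 : (1 - γ) / (1 + α) ≠ 1 := by
    rw [Ne, div_eq_one_iff_eq hαp]
    intro h
    exact mul_ne_zero hβ0 (mul_ne_zero hαm hαp)
      (by linear_combination hsum + (1 + α * β) * h)
  have hB1 : (1 + γ) / (1 - β) ≠ 1 := by
    rw [Ne, div_eq_one_iff_eq hβm]
    intro h
    exact mul_ne_zero hα0 (mul_ne_zero hβm hβp)
      (by linear_combination hsum - (1 + α * β) * h)
  have hAB : (1 - γ) / (1 + α) ≠ (1 + γ) / (1 - β) := by
    rw [Ne, div_eq_div_iff hαp hβm]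
    intro h
    exact mul_ne_zero hγ0 (mul_ne_zero hβm hαp) (by linear_combination -h - hsum)
  intro i j hij
  fin_cases i <;> fin_cases j <;> simp_all [eCoeffs, eq_comm]

theorem stmt7_general (h2 : (2 : k) ≠ 0)
    (α β γ : k) (hsum : α + β + γ + α * β * γ = 0)
    (hα : α ≠ 0 ∧ α ≠ 1 ∧ α ≠ -1) (hβ : β ≠ 0 ∧ β ≠ 1 ∧ β ≠ -1)
    (hγ : γ ≠ 0 ∧ γ ≠ 1 ∧ γ ≠ -1)
    (p : Fin 4 → k) (hp0 : p ≠ 0) (hp : onE α β γ p) :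
    ∀ g h : ZMod 2 × ZMod 2, g ≠ h → ∀ c : k, klAct k g p ≠ c • klAct k h p := by
  intro g h hgh c heq
  have hd : g + h ≠ 0 := CharTwo.add_eq_zero.not.mpr hgh
  obtain ⟨ε, hε, hvanish⟩ :=
    exists_sign_forall_eq_zero_of_mul_eq_mul h2 (klSgn_add_mul_eq_of_klAct_eq_smul heq)
  obtain ⟨m, n, hmn, hsgn⟩ := klSgn_eq_off_pair hd hε
  obtain ⟨hq1, hq2⟩ := onE_iff.mp hp
  exact hp0 <| eq_zero_of_diagonal_quadrics_of_forall_ne_pair hmn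
    ((eCoeffs_injective hsum hα hβ hγ).ne hmn) hq1 hq2
    fun i him hin => hvanish i (hsgn i him hin)

/-- for every point `p` on `E`, the orbit of `p` under the Klein four-group
action by sign changes contains exactly 4 points of `P³`: for `g ≠ h`, the representatives
`gp` and `hp` are not proportional (points of `P³` being nonzero 4-tuples up to scalar). -/
theorem stmt7 [IsAlgClosed k] (h2 : (2 : k) ≠ 0)
    (α β γ : k) (hsum : α + β + γ + α * β * γ = 0)
    (hα : α ≠ 0 ∧ α ≠ 1 ∧ α ≠ -1) (hβ : β ≠ 0 ∧ β ≠ 1 ∧ β ≠ -1)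
    (hγ : γ ≠ 0 ∧ γ ≠ 1 ∧ γ ≠ -1)
    (p : Fin 4 → k) (hp0 : p ≠ 0) (hp : onE α β γ p) :
    ∀ g h : ZMod 2 × ZMod 2, g ≠ h → ∀ c : k, klAct k g p ≠ c • klAct k h p :=
  stmt7_general h2 α β γ hsum hα hβ hγ p hp0 hp
end

section
/- If the triple (α,β,γ) ∈ k³ satisfies α + β + γ + αβγ = 0 and {α,β,γ} ∩ {0,±1} = ∅, then each of the triples (α, 1/β, 1/γ), (1/α, β, 1/γ), and (1/α, 1/β, γ) also satisfies both conditions. -/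
theorem inv_ne_zero_one_neg_one {K : Type*} [DivisionRing K] {x : K}
    (h : x ≠ 0 ∧ x ≠ 1 ∧ x ≠ -1) : x⁻¹ ≠ 0 ∧ x⁻¹ ≠ 1 ∧ x⁻¹ ≠ -1 :=
  ⟨inv_ne_zero h.1, inv_ne_one.mpr h.2.1, by rw [Ne, inv_eq_iff_eq_inv, inv_neg_one]; exact h.2.2⟩

theorem add_inv_add_inv_add_mul_inv_mul_inv_eq_zero {K : Type*} [Field K] {a b c : K}
    (hb : b ≠ 0) (hc : c ≠ 0) (h : a + b + c + a * b * c = 0) :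
    a + b⁻¹ + c⁻¹ + a * b⁻¹ * c⁻¹ = 0 := by
  have scaled : a + b⁻¹ + c⁻¹ + a * b⁻¹ * c⁻¹ = (b * c)⁻¹ * (a + b + c + a * b * c) := by
    field_simp
    ring
  rw [scaled, h, mul_zero]

/-- if `(α,β,γ)` satisfies `α+β+γ+αβγ = 0` and `{α,β,γ} ∩ {0,±1} = ∅`, then so
do `(α, 1/β, 1/γ)`, `(1/α, β, 1/γ)` and `(1/α, 1/β, γ)`. -/
theorem stmt8 {k : Type*} [Field k] (α β γ : k)
    (hsum : α + β + γ + α * β * γ = 0)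
    (hα : α ≠ 0 ∧ α ≠ 1 ∧ α ≠ -1) (hβ : β ≠ 0 ∧ β ≠ 1 ∧ β ≠ -1)
    (hγ : γ ≠ 0 ∧ γ ≠ 1 ∧ γ ≠ -1) :
    (α + β⁻¹ + γ⁻¹ + α * β⁻¹ * γ⁻¹ = 0 ∧
      (α ≠ 0 ∧ α ≠ 1 ∧ α ≠ -1) ∧ (β⁻¹ ≠ 0 ∧ β⁻¹ ≠ 1 ∧ β⁻¹ ≠ -1) ∧
      (γ⁻¹ ≠ 0 ∧ γ⁻¹ ≠ 1 ∧ γ⁻¹ ≠ -1)) ∧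
    (α⁻¹ + β + γ⁻¹ + α⁻¹ * β * γ⁻¹ = 0 ∧
      (α⁻¹ ≠ 0 ∧ α⁻¹ ≠ 1 ∧ α⁻¹ ≠ -1) ∧ (β ≠ 0 ∧ β ≠ 1 ∧ β ≠ -1) ∧
      (γ⁻¹ ≠ 0 ∧ γ⁻¹ ≠ 1 ∧ γ⁻¹ ≠ -1)) ∧
    (α⁻¹ + β⁻¹ + γ + α⁻¹ * β⁻¹ * γ = 0 ∧
      (α⁻¹ ≠ 0 ∧ α⁻¹ ≠ 1 ∧ α⁻¹ ≠ -1) ∧ (β⁻¹ ≠ 0 ∧ β⁻¹ ≠ 1 ∧ β⁻¹ ≠ -1) ∧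
      (γ ≠ 0 ∧ γ ≠ 1 ∧ γ ≠ -1)) := by
  have hαβγ := add_inv_add_inv_add_mul_inv_mul_inv_eq_zero hβ.1 hγ.1 hsum
  have hβαγ := add_inv_add_inv_add_mul_inv_mul_inv_eq_zero hα.1 hγ.1
    (by linear_combination hsum : β + α + γ + β * α * γ = 0)
  have hγαβ := add_inv_add_inv_add_mul_inv_mul_inv_eq_zero hα.1 hβ.1
    (by linear_combination hsum : γ + α + β + γ * α * β = 0)
  have hα' := inv_ne_zero_one_neg_one hα
  have hβ' := inv_ne_zero_one_neg_one hβ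
  have hγ' := inv_ne_zero_one_neg_one hγ
  exact ⟨⟨hαβγ, hα, hβ', hγ'⟩, ⟨by linear_combination hβαγ, hα', hβ, hγ'⟩,
    ⟨by linear_combination hγαβ, hα', hβ', hγ⟩⟩
end

section
/- If p ∈ P³ has exactly two non-zero coordinates and the parameters satisfy {α,β,γ} ∩ {0,±1} = ∅, then the 6×4 matrix M(p) with rows (-p₁, p₀, αp₃, -αp₂), (p₁, p₀, -p₃, -p₂), (-p₂, -βp₃, p₀, βp₁), (p₂, -p₃, p₀, -p₁), (-p₃, -γp₂, γp₁, p₀), (p₃, p₂, p₁, p₀) has rank at least 4. -/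
/-!
When only two coordinates `pᵢ, pⱼ` of `p` are nonzero, one of the two 4 × 4 minors of `M(p)` on
the rows `{0, 1, 2, 3}` and `{0, 1, 4, 5}` collapses to a single monomial `2 c pᵢ² pⱼ²`, with
`c` one of `1 + β`, `α - 1`, `1 + α`, `γ (1 + α)`, `β (α - 1)`, `α (1 + β)`; these are nonzero
because `α, β, γ ∉ {0, ±1}`.
-/

open Matrix

theorem Matrix.card_le_rank_of_det_submatrix_ne_zero {m n n₀ R : Type*} [Fintype n] [Fintype n₀]
    [DecidableEq n₀] [CommRing R] [IsDomain R] (A : Matrix m n R) (r : n₀ → m) (c : n₀ → n)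
    (h : (A.submatrix r c).det ≠ 0) : Fintype.card n₀ ≤ A.rank :=
  (rank_of_det_ne_zero h).symm.le.trans (rank_submatrix_le A r c)

section TwistedSklyanin

variable {k : Type*} [Field k] (α β γ : k) (p : Fin 4 → k)

def twistedSklyaninMatrix : Matrix (Fin 6) (Fin 4) k :=
  !![-p 1, p 0, α * p 3, -α * p 2;
     p 1, p 0, -p 3, -p 2;
     -p 2, -β * p 3, p 0, β * p 1;
     p 2, -p 3, p 0, -p 1;
     -p 3, -γ * p 2, γ * p 1, p 0;
     p 3, p 2, p 1, p 0]

theorem det_twistedSklyaninMatrix_submatrix_0123 :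
    ((twistedSklyaninMatrix α β γ p).submatrix ![0, 1, 2, 3] id).det =
      2 * ((1 + β) * (p 0 ^ 2 * p 1 ^ 2 - α * p 2 ^ 2 * p 3 ^ 2) +
        (α - 1) * (p 0 ^ 2 * p 2 ^ 2 + β * p 1 ^ 2 * p 3 ^ 2)) := by
  simp only [det_succ_row_zero, Fin.sum_univ_succ]
  simp [twistedSklyaninMatrix, submatrix, Fin.succAbove, Fin.lt_def]
  ring

theorem det_twistedSklyaninMatrix_submatrix_0145 :
    ((twistedSklyaninMatrix α β γ p).submatrix ![0, 1, 4, 5] id).det =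
      2 * ((1 + α) * (p 0 ^ 2 * p 3 ^ 2 - γ * p 1 ^ 2 * p 2 ^ 2) +
        (1 - γ) * (p 0 ^ 2 * p 1 ^ 2 + α * p 2 ^ 2 * p 3 ^ 2)) := by
  simp only [det_succ_row_zero, Fin.sum_univ_succ]
  simp [twistedSklyaninMatrix, submatrix, Fin.succAbove, Fin.lt_def]
  ring

theorem four_le_rank_twistedSklyaninMatrix_of_det_ne_zero (r : Fin 4 → Fin 6)
    (h : ((twistedSklyaninMatrix α β γ p).submatrix r id).det ≠ 0) :
    4 ≤ (twistedSklyaninMatrix α β γ p).rank := by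
  simpa using (twistedSklyaninMatrix α β γ p).card_le_rank_of_det_submatrix_ne_zero r id h

end TwistedSklyanin

/-- if `p ∈ P³` has exactly two non-zero coordinates and
`{α,β,γ} ∩ {0,±1} = ∅` (with `char k ≠ 2`), then the 6×4 matrix of the multilinearised
relations of the twisted Sklyanin algebra, evaluated at `p`, has rank at least 4. -/
theorem stmt19 {k : Type*} [Field k] (h2 : (2 : k) ≠ 0)
    (α β γ : k)
    (hα : α ≠ 0 ∧ α ≠ 1 ∧ α ≠ -1) (hβ : β ≠ 0 ∧ β ≠ 1 ∧ β ≠ -1)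
    (hγ : γ ≠ 0 ∧ γ ≠ 1 ∧ γ ≠ -1)
    (p : Fin 4 → k)
    (htwo : ∃ i j : Fin 4, i ≠ j ∧ p i ≠ 0 ∧ p j ≠ 0 ∧
      ∀ l : Fin 4, l ≠ i → l ≠ j → p l = 0) :
    4 ≤ (!![-p 1, p 0, α * p 3, -α * p 2;
            p 1, p 0, -p 3, -p 2;
            -p 2, -β * p 3, p 0, β * p 1;
            p 2, -p 3, p 0, -p 1;
            -p 3, -γ * p 2, γ * p 1, p 0;
            p 3, p 2, p 1, p 0] : Matrix (Fin 6) (Fin 4) k).rank := by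
  obtain ⟨i, j, hij, hi, hj, hzero⟩ := htwo
  have hα₁ : α - 1 ≠ 0 := sub_ne_zero.2 hα.2.1
  have hα₂ : 1 + α ≠ 0 := fun h => hα.2.2 (by linear_combination h)
  have hβ₂ : 1 + β ≠ 0 := fun h => hβ.2.2 (by linear_combination h)
  change 4 ≤ (twistedSklyaninMatrix α β γ p).rank
  wlog hlt : i < j generalizing i j
  · exact this j i hij.symm hj hi (fun l hlj hli => hzero l hli hlj)
      (lt_of_le_of_ne (not_lt.1 hlt) hij.symm)
  have rows_0123 := four_le_rank_twistedSklyaninMatrix_of_det_ne_zero α β γ p ![0, 1, 2, 3]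
  have rows_0145 := four_le_rank_twistedSklyaninMatrix_of_det_ne_zero α β γ p ![0, 1, 4, 5]
  rw [det_twistedSklyaninMatrix_submatrix_0123] at rows_0123
  rw [det_twistedSklyaninMatrix_submatrix_0145] at rows_0145
  fin_cases i <;> fin_cases j <;> simp at hlt hi hj hzero
  · exact rows_0123 (by simp [hzero, h2, hβ₂, hi, hj])
  · exact rows_0123 (by simp [hzero, h2, hα₁, hi, hj])
  · exact rows_0145 (by simp [hzero, h2, hα₂, hi, hj])
  · exact rows_0145 (by simp [hzero, h2, hγ.1, hα₂, hi, hj])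
  · exact rows_0123 (by simp [hzero, h2, hβ.1, hα₁, hi, hj])
  · exact rows_0123 (by simp [hzero, h2, hα.1, hβ₂, hi, hj])
end
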